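/- Let j : J ↪ C be an α-bounded subcategory of arities in a cocomplete V-factegory C (a V-category with an enriched factorization system compatible with that of V, cocomplete with cointersections of E-morphisms). Then every V-endofunctor H : C → C that is a left Kan extension along j is α-bounded. In particular every J-ary V-endofunctor is α-bounded. -/

import Mathlib

/-!
Maps `H X ⟶ Z` correspond, naturally in `X` and `Z`, to natural transformations
`C(j-, X) ⟶ C(D-, Z)` (the pointwise formula for `H`); that is, `H` is `X ↦ C(j-, X)` followed
by the weighted colimit `(-) ∗ D`, a left adjoint of `Z ↦ C(D-, Z)`. Hence a lifting problem of
the comparison map `colim (G ⋙ H) ⟶ H c.pt` against `m ∈ M` transposes to one of the comparison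
map of `X ↦ C(j-, X)` against `C(D-, m)`. The latter map is pointwise in `E` because each
`C(j A, -)` is α-bounded, and `C(D-, m)` is pointwise in `M` by compatibility of the
factorization systems. Pointwise unique lifts are automatically natural, so the transposed
problem, and hence the original one, has a unique solution; a map with unique lifts against
all of `M` lies in `E`.
-/

open CategoryTheory CategoryTheory.Limits Opposite

universe v u

namespace Stmt16

/-- A (not necessarily proper) factorization system `(E, M)` on a category. -/
structure FS (C : Type u) [Category.{v} C] where
  E : MorphismProperty C
  M : MorphismProperty C
  E_of_iso : ∀ {X Y : C} (f : X ⟶ Y), IsIso f → E f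
  M_of_iso : ∀ {X Y : C} (f : X ⟶ Y), IsIso f → M f
  E_comp : ∀ {X Y Z : C} (f : X ⟶ Y) (g : Y ⟶ Z), E f → E g → E (f ≫ g)
  M_comp : ∀ {X Y Z : C} (f : X ⟶ Y) (g : Y ⟶ Z), M f → M g → M (f ≫ g)
  fac : ∀ {X Y : C} (f : X ⟶ Y), ∃ (Z : C) (e : X ⟶ Z) (m : Z ⟶ Y), E e ∧ M m ∧ e ≫ m = f
  lift : ∀ {A B X Y : C} (e : A ⟶ B) (m : X ⟶ Y), E e → M m →
    ∀ (u : A ⟶ X) (v : B ⟶ Y), u ≫ m = e ≫ v →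
      ∃! d : B ⟶ X, e ≫ d = u ∧ d ≫ m = v

variable {J : Type v} [SmallCategory J] {C : Type u} [Category.{v} C]

section
variable [HasColimitsOfSize.{v, v} C]

/-- A category `K` is α-filtered: every diagram in `K` with fewer than `α`
arrows admits a cocone. -/
def IsAlphaFiltered (α : Cardinal.{v}) (K : Type v) [SmallCategory K] : Prop :=
  ∀ (J' : Type v) (_ : SmallCategory J'), Cardinal.mk (Arrow J') < α →
    ∀ G : J' ⥤ K, Nonempty (Cocone G)

/-- A cocone is an `M`-cocone if all its components lie in `M`. -/
def MCocone {C' : Type*} [Category C'] (F : FS C') {K : Type v} [SmallCategory K]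
    {G : K ⥤ C'} (c : Cocone G) : Prop :=
  ∀ k, F.M (c.ι.app k)

/-- A functor between factegories is α-bounded if it preserves the
`E`-tightness of small α-filtered `M`-cocones. -/
def AlphaBounded {D : Type*} [Category.{v} D] [HasColimitsOfSize.{v, v} D]
    (FC : FS C) (FD : FS D) (α : Cardinal.{v}) (F : C ⥤ D) : Prop :=
  ∀ (K : Type v) (_ : SmallCategory K), IsAlphaFiltered α K →
    ∀ (G : K ⥤ C) (c : Cocone G), MCocone FC c →
      FC.E (colimit.desc G c) →
        FD.E (colimit.desc (G ⋙ F) (F.mapCocone c))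

/-- The diagram whose conical colimit computes the `W`-weighted colimit of `D`. -/
def elDiag {B : Type v} [SmallCategory B] (W : Bᵒᵖ ⥤ Type v) {E : Type u} [Category.{v} E]
    (D : B ⥤ E) : W.Elementsᵒᵖ ⥤ E :=
  (CategoryOfElements.π W).leftOp ⋙ D

/-- The weight `C(j-, X)`. -/
def homWeight (j : J ⥤ C) (X : C) : Jᵒᵖ ⥤ Type v :=
  j.op ⋙ yoneda.obj X

/-- The canonical cocone on the elements diagram of `C(j-, X)` with vertex `X`. -/
@[simps]
def densityCocone (j : J ⥤ C) (X : C) : Cocone (elDiag (homWeight j X) j) where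
  pt := X
  ι :=
    { app := fun p => p.unop.2
      naturality := fun p q f => by
        have := f.unop.2
        dsimp [elDiag, homWeight] at this ⊢
        exact this.trans (Category.comp_id _).symm }

/-- Density of `j`. -/
def Dense (j : J ⥤ C) : Prop :=
  ∀ X : C, Nonempty (IsColimit (densityCocone j X))

/-- `H` is `J`-ary: it preserves `Φ_J`-colimits. -/
def JAry (j : J ⥤ C) (H : C ⥤ C) : Prop :=
  ∀ (X : C) (D : J ⥤ C), PreservesColimit (elDiag (homWeight j X) D) H

end

def HasUniqueLiftingProperty {T : Type*} [Category T] {X Y A B : T} (e : X ⟶ Y) (m : A ⟶ B) :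
    Prop :=
  ∀ (u : X ⟶ A) (v : Y ⟶ B), u ≫ m = e ≫ v → ∃! d : Y ⟶ A, e ≫ d = u ∧ d ≫ m = v

namespace FS

variable {T : Type*} [Category T] (F : FS T)

lemma E_of_hasUniqueLiftingProperty {X Y : T} {f : X ⟶ Y}
    (h : ∀ ⦃A B : T⦄ (m : A ⟶ B), F.M m → HasUniqueLiftingProperty f m) : F.E f := by
  obtain ⟨Z, e, m, he, hm, rfl⟩ := F.fac f
  obtain ⟨d, ⟨hed, hdm⟩, -⟩ := h m hm e (𝟙 Y) (by rw [Category.comp_id])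
  have hmd : m ≫ d = 𝟙 Z :=
    (F.lift e m he hm e m rfl).unique (y₁ := m ≫ d) (y₂ := 𝟙 Z)
      ⟨by rw [← Category.assoc, hed], by rw [Category.assoc, hdm, Category.comp_id]⟩
      ⟨Category.comp_id e, Category.id_comp m⟩
  exact F.E_comp e m he (F.E_of_iso m ⟨d, hmd, hdm⟩)

lemma E_desc_of_isColimit {K : Type*} [Category K] {G : K ⥤ T} [HasColimit G] {t : Cocone G}
    (ht : IsColimit t) (s : Cocone G) (h : F.E (colimit.desc G s)) : F.E (ht.desc s) := by
  rw [← ht.coconePointUniqueUpToIso_hom_desc (colimit.isColimit G)]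
  exact F.E_comp _ _ (F.E_of_iso _ inferInstance) h

lemma hasUniqueLiftingProperty_of_app {I : Type*} [Category I] {P Q R S : I ⥤ T}
    {e : P ⟶ Q} {m : R ⟶ S} (he : ∀ i, F.E (e.app i)) (hm : ∀ i, F.M (m.app i)) :
    HasUniqueLiftingProperty e m := by
  intro u v huv
  have square (i : I) : u.app i ≫ m.app i = e.app i ≫ v.app i := by
    simpa using congr_app huv i
  choose δ hδ hδ_unique using fun i => F.lift _ _ (he i) (hm i) (u.app i) (v.app i) (square i)
  -- `Q.map t ≫ δ i'` and `δ i ≫ R.map t` both solve the lifting problem of `e.app i` against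
  -- `m.app i'` with sides `u.app i ≫ R.map t` and `v.app i ≫ S.map t`.
  have naturality : ∀ ⦃i i' : I⦄ (t : i ⟶ i'), Q.map t ≫ δ i' = δ i ≫ R.map t := by
    intro i i' t
    refine (F.lift _ _ (he i) (hm i') (u.app i ≫ R.map t) (v.app i ≫ S.map t) ?_).unique
      (y₁ := Q.map t ≫ δ i') (y₂ := δ i ≫ R.map t) ⟨?_, ?_⟩ ⟨?_, ?_⟩
    · rw [Category.assoc, m.naturality, reassoc_of% (square i)]
    · rw [← e.naturality_assoc, (hδ i').1, u.naturality]
    · rw [Category.assoc, (hδ i').2, v.naturality]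
    · rw [reassoc_of% (hδ i).1]
    · rw [Category.assoc, m.naturality, reassoc_of% (hδ i).2]
  refine ⟨⟨δ, naturality⟩, ⟨?_, ?_⟩, fun d hd => ?_⟩
  · ext1; funext i; exact (hδ i).1
  · ext1; funext i; exact (hδ i).2
  · ext1; funext i; exact hδ_unique i (d.app i) ⟨congr_app hd.1 i, congr_app hd.2 i⟩

end FS

/-- `Φ₀` and `Φ₁` behave like the transposition maps of an adjunction `L ⊣ R` for which
`e ≅ L.map e'`; no such `L` is needed. -/
lemma HasUniqueLiftingProperty.of_transpose {T P : Type*} [Category T] [Category P] (R : T ⥤ P)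
    {X₀ X₁ : T} {Y₀ Y₁ : P} {e : X₀ ⟶ X₁} {e' : Y₀ ⟶ Y₁}
    (Φ₀ : ∀ {Z}, (X₀ ⟶ Z) → (Y₀ ⟶ R.obj Z)) (Φ₁ : ∀ {Z}, (X₁ ⟶ Z) → (Y₁ ⟶ R.obj Z))
    (hΦ₀ : ∀ Z, Function.Injective (@Φ₀ Z)) (hΦ₁ : ∀ Z, Function.Bijective (@Φ₁ Z))
    (hΦ₀_comp : ∀ {Z Z'} (f : X₀ ⟶ Z) (g : Z ⟶ Z'), Φ₀ (f ≫ g) = Φ₀ f ≫ R.map g)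
    (hΦ₁_comp : ∀ {Z Z'} (f : X₁ ⟶ Z) (g : Z ⟶ Z'), Φ₁ (f ≫ g) = Φ₁ f ≫ R.map g)
    (he : ∀ {Z} (f : X₁ ⟶ Z), Φ₀ (e ≫ f) = e' ≫ Φ₁ f)
    {A B : T} {m : A ⟶ B} (h : HasUniqueLiftingProperty e' (R.map m)) :
    HasUniqueLiftingProperty e m := by
  intro u v huv
  obtain ⟨d', ⟨hd'₁, hd'₂⟩, hd'_unique⟩ := h (Φ₀ u) (Φ₁ v) (by rw [← hΦ₀_comp, huv, he])
  obtain ⟨d, rfl⟩ := (hΦ₁ A).2 d'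
  refine ⟨d, ⟨hΦ₀ _ (by rw [he, hd'₁]), (hΦ₁ _).1 (by rw [hΦ₁_comp, hd'₂])⟩, fun d₀ hd₀ => ?_⟩
  exact (hΦ₁ _).1 (hd'_unique _ ⟨by rw [← he, hd₀.1], by rw [← hΦ₁_comp, hd₀.2]⟩)

def homWeightFunctor {B : Type v} [SmallCategory B] {A : Type*} [Category.{v} A] (F : B ⥤ A) :
    A ⥤ Bᵒᵖ ⥤ Type v :=
  yoneda ⋙ (Functor.whiskeringLeft _ _ _).obj F.op

section LanTranspose

variable {j D : J ⥤ C} {H : C ⥤ C} (η : D ⟶ j ⋙ H)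

def lanTranspose {X Z : C} (f : H.obj X ⟶ Z) :
    (homWeightFunctor j).obj X ⟶ (homWeightFunctor D).obj Z where
  app a := TypeCat.ofHom fun g => η.app a.unop ≫ H.map g ≫ f
  naturality a b t := by
    refine ConcreteCategory.hom_ext _ _ fun (g : j.obj a.unop ⟶ X) => ?_
    change η.app b.unop ≫ H.map (j.map t.unop ≫ g) ≫ f =
      D.map t.unop ≫ η.app a.unop ≫ H.map g ≫ f
    simp [reassoc_of% (η.naturality t.unop)]

lemma lanTranspose_comp {X Z Z' : C} (f : H.obj X ⟶ Z) (g : Z ⟶ Z') :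
    lanTranspose η (f ≫ g) = lanTranspose η f ≫ (homWeightFunctor D).map g := by
  ext a : 2
  refine ConcreteCategory.hom_ext _ _ fun (x : j.obj a.unop ⟶ X) => ?_
  change η.app a.unop ≫ H.map x ≫ f ≫ g = (η.app a.unop ≫ H.map x ≫ f) ≫ g
  simp

lemma lanTranspose_map_comp {X X' Z : C} (h : X ⟶ X') (f : H.obj X' ⟶ Z) :
    lanTranspose η (H.map h ≫ f) = (homWeightFunctor j).map h ≫ lanTranspose η f := by
  ext a : 2
  refine ConcreteCategory.hom_ext _ _ fun (x : j.obj a.unop ⟶ X) => ?_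
  change η.app a.unop ≫ H.map x ≫ H.map h ≫ f = η.app a.unop ≫ H.map (x ≫ h) ≫ f
  simp

end LanTranspose

section Colimit

variable [HasColimitsOfSize.{v, v} C] {j D : J ⥤ C} {H : C ⥤ C} (η : D ⟶ j ⋙ H)
  {K : Type v} [SmallCategory K] (G : K ⥤ C)

noncomputable def lanTransposeColimit {Z : C} (f : colimit (G ⋙ H) ⟶ Z) :
    colimit (G ⋙ homWeightFunctor j) ⟶ (homWeightFunctor D).obj Z :=
  colimit.desc (G ⋙ homWeightFunctor j)
    { pt := (homWeightFunctor D).obj Z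
      ι :=
        { app k := lanTranspose η (colimit.ι (G ⋙ H) k ≫ f)
          naturality k k' t := by
            simp only [Functor.const_obj_map, Functor.comp_map, ← lanTranspose_map_comp]
            rw [← Functor.comp_map G H, colimit.w_assoc]
            exact (Category.comp_id _).symm } }

lemma lanTransposeColimit_comp {Z Z' : C} (f : colimit (G ⋙ H) ⟶ Z) (g : Z ⟶ Z') :
    lanTransposeColimit η G (f ≫ g) = lanTransposeColimit η G f ≫ (homWeightFunctor D).map g :=
  colimit.hom_ext fun k => by simp [lanTransposeColimit, lanTranspose_comp]

lemma lanTransposeColimit_desc_comp (c : Cocone G) {Z : C} (f : H.obj c.pt ⟶ Z) :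
    lanTransposeColimit η G (colimit.desc (G ⋙ H) (H.mapCocone c) ≫ f) =
      colimit.desc (G ⋙ homWeightFunctor j) ((homWeightFunctor j).mapCocone c) ≫
        lanTranspose η f :=
  colimit.hom_ext fun k => by simp [lanTransposeColimit, lanTranspose_map_comp]

lemma lanTransposeColimit_injective
    (hη : ∀ X Z : C, Function.Injective (lanTranspose η : (H.obj X ⟶ Z) → _)) (Z : C) :
    Function.Injective (lanTransposeColimit η G : (colimit (G ⋙ H) ⟶ Z) → _) := by
  intro f g hfg
  refine colimit.hom_ext fun k => hη _ _ ?_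
  simpa [lanTransposeColimit] using colimit.ι _ k ≫= hfg

lemma hasUniqueLiftingProperty_colimitDesc_of_lanTranspose_bijective
    (hη : ∀ X Z : C, Function.Bijective (lanTranspose η : (H.obj X ⟶ Z) → _)) (c : Cocone G)
    {A B : C} {m : A ⟶ B}
    (h : HasUniqueLiftingProperty
      (colimit.desc (G ⋙ homWeightFunctor j) ((homWeightFunctor j).mapCocone c))
      ((homWeightFunctor D).map m)) :
    HasUniqueLiftingProperty (colimit.desc (G ⋙ H) (H.mapCocone c)) m :=
  h.of_transpose (homWeightFunctor D) (lanTransposeColimit η G) (lanTranspose η)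
    (lanTransposeColimit_injective η G fun X Z => (hη X Z).1) (hη c.pt)
    (lanTransposeColimit_comp η G) (lanTranspose_comp η) (lanTransposeColimit_desc_comp η G c)

end Colimit

lemma E_colimitDesc_homWeightFunctor_app (F0 : FS (Type v)) (j : J ⥤ C) {K : Type v}
    [SmallCategory K] (G : K ⥤ C) (c : Cocone G) (a : Jᵒᵖ)
    (h : F0.E (colimit.desc (G ⋙ coyoneda.obj (op (j.obj a.unop)))
      ((coyoneda.obj (op (j.obj a.unop))).mapCocone c))) :
    F0.E ((colimit.desc (G ⋙ homWeightFunctor j) ((homWeightFunctor j).mapCocone c)).app a) := by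
  have := F0.E_desc_of_isColimit
    (isColimitOfPreserves ((evaluation Jᵒᵖ (Type v)).obj a)
      (colimit.isColimit (G ⋙ homWeightFunctor j)))
    (((evaluation Jᵒᵖ (Type v)).obj a).mapCocone ((homWeightFunctor j).mapCocone c)) h
  rwa [preserves_desc_mapCocone] at this

lemma alphaBounded_of_lanTranspose_bijective [HasColimitsOfSize.{v, v} C] {j D : J ⥤ C}
    {H : C ⥤ C} (η : D ⟶ j ⋙ H) (FC : FS C) (F0 : FS (Type v)) (α : Cardinal.{v})
    (hcompat : ∀ (X : C) {A B : C} (m : A ⟶ B), FC.M m →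
      F0.M ((coyoneda.obj (op X)).map m))
    (hbdd : ∀ A : J, AlphaBounded FC F0 α (coyoneda.obj (op (j.obj A))))
    (hη : ∀ X Z : C, Function.Bijective (lanTranspose η : (H.obj X ⟶ Z) → _)) :
    AlphaBounded FC FC α H := by
  intro K _ hK G c hMc hE
  refine FC.E_of_hasUniqueLiftingProperty fun A B m hm =>
    hasUniqueLiftingProperty_colimitDesc_of_lanTranspose_bijective η G hη c
      (F0.hasUniqueLiftingProperty_of_app (fun a => ?_) fun a => hcompat _ m hm)
  exact E_colimitDesc_homWeightFunctor_app F0 j G c a (hbdd a.unop K _ hK G c hMc hE)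

lemma lanTranspose_bijective_of_isPointwiseLeftKanExtension {j D : J ⥤ C} {H : C ⥤ C}
    (η : D ⟶ j ⋙ H) (hη : (Functor.LeftExtension.mk H η).IsPointwiseLeftKanExtension) (X Z : C) :
    Function.Bijective (lanTranspose η : (H.obj X ⟶ Z) → _) := by
  refine ⟨fun f g hfg => (hη X).hom_ext fun a => ?_, fun τ => ?_⟩
  · have h := ConcreteCategory.congr_hom (congr_app hfg (op a.left)) a.hom
    change η.app a.left ≫ H.map a.hom ≫ f = η.app a.left ≫ H.map a.hom ≫ g at h
    change (η.app a.left ≫ H.map a.hom) ≫ f = (η.app a.left ≫ H.map a.hom) ≫ g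
    simpa using h
  · let s : Cocone (CostructuredArrow.proj j X ⋙ D) :=
      { pt := Z
        ι :=
          { app a := τ.app (op a.left) a.hom
            naturality a b t := by
              have h := ConcreteCategory.congr_hom (τ.naturality t.left.op) b.hom
              change τ.app (op a.left) (j.map t.left ≫ b.hom) =
                D.map t.left ≫ τ.app (op b.left) b.hom at h
              exact h.symm.trans <| (congrArg (τ.app (op a.left)) (CostructuredArrow.w t)).trans
                (Category.comp_id _).symm } }
    refine ⟨(hη X).desc s, ?_⟩
    ext a : 2
    refine ConcreteCategory.hom_ext _ _ fun (g : j.obj a.unop ⟶ X) => ?_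
    exact (Category.assoc _ _ _).symm.trans ((hη X).fac s (CostructuredArrow.mk g))

lemma lanTranspose_bijective_of_dense {j : J ⥤ C} (hd : Dense j)
    {H : C ⥤ C} (hH : JAry j H) (X Z : C) :
    Function.Bijective (lanTranspose (𝟙 (j ⋙ H)) : (H.obj X ⟶ Z) → _) := by
  have := hH X j
  have hc : IsColimit (H.mapCocone (densityCocone j X)) := isColimitOfPreserves H (hd X).some
  refine ⟨fun f g hfg => hc.hom_ext fun p => ?_, fun τ => ?_⟩
  · have h := ConcreteCategory.congr_hom (congr_app hfg p.unop.1) p.unop.2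
    change 𝟙 _ ≫ H.map p.unop.2 ≫ f = 𝟙 _ ≫ H.map p.unop.2 ≫ g at h
    rw [Category.id_comp, Category.id_comp] at h
    exact h
  · let s : Cocone (elDiag (homWeight j X) j ⋙ H) :=
      { pt := Z
        ι :=
          { app p := τ.app p.unop.1 p.unop.2
            naturality p q t := by
              have h := ConcreteCategory.congr_hom (τ.naturality t.unop.1) q.unop.2
              change τ.app p.unop.1 (j.map t.unop.1.unop ≫ q.unop.2) =
                H.map (j.map t.unop.1.unop) ≫ τ.app q.unop.1 q.unop.2 at h
              have ht : j.map t.unop.1.unop ≫ q.unop.2 = p.unop.2 := t.unop.2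
              exact h.symm.trans <| (congrArg (τ.app p.unop.1) ht).trans
                (Category.comp_id _).symm } }
    refine ⟨hc.desc s, ?_⟩
    ext a : 2
    refine ConcreteCategory.hom_ext _ _ fun (g : j.obj a.unop ⟶ X) => ?_
    change 𝟙 _ ≫ H.map g ≫ hc.desc s = τ.app a g
    rw [Category.id_comp]
    exact hc.fac s (op ⟨a, g⟩)

section

variable [HasColimitsOfSize.{v, v} C]

theorem stmt16_general (j : J ⥤ C) (hd : Dense j)
    (FC : FS C) (F0 : FS (Type v)) (α : Cardinal.{v})
    (hcompat : ∀ (X : C) {A B : C} (m : A ⟶ B), FC.M m →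
      F0.M ((coyoneda.obj (op X)).map m))
    (hbdd : ∀ A : J, AlphaBounded FC F0 α (coyoneda.obj (op (j.obj A)))) :
    (∀ H : C ⥤ C, (∃ (D : J ⥤ C) (η : D ⟶ j ⋙ H), H.IsLeftKanExtension η) →
        AlphaBounded FC FC α H) ∧
      (∀ H : C ⥤ C, JAry j H → AlphaBounded FC FC α H) := by
  refine ⟨fun H ⟨D, η, _⟩ => ?_, fun H hH => ?_⟩
  · exact alphaBounded_of_lanTranspose_bijective η FC F0 α hcompat hbdd
      (lanTranspose_bijective_of_isPointwiseLeftKanExtension η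
        (Functor.isPointwiseLeftKanExtensionOfIsLeftKanExtension H η))
  · exact alphaBounded_of_lanTranspose_bijective (𝟙 (j ⋙ H)) FC F0 α hcompat hbdd
      (lanTranspose_bijective_of_dense hd hH)

theorem stmt16 (j : J ⥤ C) [j.Full] [j.Faithful] (hd : Dense j)
    (FC : FS C) (F0 : FS (Type v)) (α : Cardinal.{v}) (hα : α.IsRegular)
    (hcompat : ∀ (X : C) {A B : C} (m : A ⟶ B), FC.M m →
      F0.M ((coyoneda.obj (op X)).map m))
    (hcoint : ∀ (I : Type v) (X : C) (Y : I → C) (e : ∀ i, X ⟶ Y i),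
      (∀ i, FC.E (e i)) → HasWidePushout X Y e)
    (hbdd : ∀ A : J, AlphaBounded FC F0 α (coyoneda.obj (op (j.obj A)))) :
    (∀ H : C ⥤ C, (∃ (D : J ⥤ C) (η : D ⟶ j ⋙ H), H.IsLeftKanExtension η) →
        AlphaBounded FC FC α H) ∧
      (∀ H : C ⥤ C, JAry j H → AlphaBounded FC FC α H) :=
  stmt16_general j hd FC F0 α hcompat hbdd

end

end Stmt16
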